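/- arXiv:1809.02271 — 2 statements merged into one kernel-verified Lean document; each statement's English description precedes it below -/
import Mathlib

section
/- For all q ∈ [0,1], s ∈ [0,1], and integers t ≥ 1, we have 1 + e^{s-1}·(1 - (1-q)·s/t)^t + e^{s-1}·(1-q)^t·(1 - s/t)^t evaluated at q = 0.464587 is at most 1.60793. -/
/-!
Write `p = 1 - q` and `f_t(s) = e^{s-1} ((1 - p s/t)^t + p^t (1 - s/t)^t)` (`roundingExcess p t s`);
the claim is `f_t(s) ≤ 0.60793`. For `t ≥ 5`, `(1 - x/t)^t ≤ e^{-x}` gives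
`f_t(s) ≤ e^{-p} + p^5/e`, well below the bound. For `t ≤ 4`, multiplying by `e^{1-s}` turns the
claim into a polynomial inequality once `e^{1-s}` is replaced by a polynomial lower bound. The cases
`t = 1` (at `s ≈ 0.4339`) and `t = 2` (at `s = 1`) are tight to within `10⁻⁵`: for `t = 1` we use
the tangent line of `exp` at the maximiser, for `t = 2` the cubic Taylor polynomial.
-/

open Real

noncomputable def roundingExcess (p : ℝ) (t : ℕ) (s : ℝ) : ℝ :=
  exp (s - 1) * ((1 - p * s / t) ^ t + p ^ t * (1 - s / t) ^ t)

lemma cubic_le_exp_of_nonneg {x : ℝ} (hx : 0 ≤ x) : 1 + x + x ^ 2 / 2 + x ^ 3 / 6 ≤ exp x := by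
  have h := sum_le_exp_of_nonneg hx 4
  norm_num [Finset.sum_range_succ, Nat.factorial] at h
  linarith

lemma exp_mul_sub_add_one_le_exp (c x : ℝ) : exp c * (x - c + 1) ≤ exp x := by
  calc exp c * (x - c + 1) ≤ exp c * exp (x - c) := by gcongr; exact add_one_le_exp _
    _ = exp x := by rw [← exp_add, add_sub_cancel]

lemma exp_sub_one_mul_le_of_le_mul_exp {s P B : ℝ} (h : P ≤ B * exp (1 - s)) :
    exp (s - 1) * P ≤ B := by
  calc exp (s - 1) * P ≤ exp (s - 1) * (B * exp (1 - s)) := by gcongr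
    _ = B := by rw [mul_left_comm, ← exp_add]; simp

lemma roundingExcess_le_exp_neg_add {p s : ℝ} {t : ℕ} (hp0 : 0 ≤ p) (hp1 : p ≤ 1) (hs1 : s ≤ 1)
    (ht : 1 ≤ t) :
    roundingExcess p t s ≤ exp (-p) + p ^ t * exp (-1) := by
  have hst : s ≤ t := hs1.trans (by exact_mod_cast ht)
  have first : exp (s - 1) * (1 - p * s / t) ^ t ≤ exp (-p) := by
    calc exp (s - 1) * (1 - p * s / t) ^ t ≤ exp (s - 1) * exp (-(p * s)) := by
          gcongr
          exact one_sub_div_pow_le_exp_neg (by nlinarith [mul_nonneg hp0 (sub_nonneg.2 hs1)])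
      _ ≤ exp (-p) := by
          rw [← exp_add]
          exact exp_le_exp.mpr (by nlinarith)
  have second : exp (s - 1) * (1 - s / t) ^ t ≤ exp (-1) := by
    calc exp (s - 1) * (1 - s / t) ^ t ≤ exp (s - 1) * exp (-s) := by
          gcongr
          exact one_sub_div_pow_le_exp_neg hst
      _ = exp (-1) := by rw [← exp_add]; ring_nf
  calc roundingExcess p t s
        = exp (s - 1) * (1 - p * s / t) ^ t + p ^ t * (exp (s - 1) * (1 - s / t) ^ t) := by
          unfold roundingExcess; ring
    _ ≤ exp (-p) + p ^ t * exp (-1) := by gcongr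

lemma roundingExcess_one_le {s : ℝ} (hs0 : 0 ≤ s) (hs1 : s ≤ 1) :
    roundingExcess 0.535413 1 s ≤ 0.60793 := by
  -- `0.566128 ≈ 1 - s*`, where `s* = (1 - p) / (2p)` maximises `f_1`
  have hc : (1.7614295 : ℝ) ≤ exp 0.566128 := by
    have h := sum_le_exp_of_nonneg (x := 0.566128) (by norm_num) 7
    norm_num [Finset.sum_range_succ, Nat.factorial] at h
    linarith
  unfold roundingExcess
  apply exp_sub_one_mul_le_of_le_mul_exp
  have tangent : 1.7614295 * (1 - s - 0.566128 + 1) ≤ exp (1 - s) :=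
    (mul_le_mul_of_nonneg_right hc (by linarith)).trans (exp_mul_sub_add_one_le_exp _ _)
  norm_num
  linarith

lemma roundingExcess_two_le {s : ℝ} (hs1 : s ≤ 1) :
    roundingExcess 0.535413 2 s ≤ 0.60793 := by
  have taylor := cubic_le_exp_of_nonneg (x := 1 - s) (by linarith)
  unfold roundingExcess
  apply exp_sub_one_mul_le_of_le_mul_exp
  norm_num
  nlinarith [sq_nonneg (1 - s), pow_nonneg (by linarith : (0 : ℝ) ≤ 1 - s) 3]

lemma roundingExcess_three_le {s : ℝ} (hs0 : 0 ≤ s) (hs1 : s ≤ 1) :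
    roundingExcess 0.535413 3 s ≤ 0.60793 := by
  have linear : 2 - s ≤ exp (1 - s) := by linarith [add_one_le_exp (1 - s)]
  unfold roundingExcess
  apply exp_sub_one_mul_le_of_le_mul_exp
  norm_num
  have hu : 0 ≤ 1 - s := by linarith
  nlinarith [mul_nonneg hs0 hu, mul_nonneg (mul_nonneg hs0 hs0) hu, mul_nonneg (mul_nonneg hs0 hu) hu]

lemma roundingExcess_four_le {s : ℝ} (hs0 : 0 ≤ s) (hs1 : s ≤ 1) :
    roundingExcess 0.535413 4 s ≤ 0.60793 := by
  have linear : 2 - s ≤ exp (1 - s) := by linarith [add_one_le_exp (1 - s)]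
  unfold roundingExcess
  apply exp_sub_one_mul_le_of_le_mul_exp
  norm_num
  have hu : 0 ≤ 1 - s := by linarith
  nlinarith [mul_nonneg hs0 hu, mul_nonneg (mul_nonneg hs0 hs0) hu, mul_nonneg (mul_nonneg hs0 hu) hu,
    mul_nonneg (mul_nonneg (mul_nonneg hs0 hs0) hs0) hu]

lemma roundingExcess_le_of_five_le {s : ℝ} (hs1 : s ≤ 1) {t : ℕ} (ht : 5 ≤ t) :
    roundingExcess 0.535413 t s ≤ 0.60793 := by
  have hexp : exp (-0.535413) ≤ 0.59 := by
    have h := cubic_le_exp_of_nonneg (x := 0.535413) (by norm_num)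
    rw [exp_neg]
    exact inv_le_of_inv_le₀ (by norm_num) (by norm_num at h ⊢; linarith)
  have hpow : (0.535413 : ℝ) ^ t ≤ 0.535413 ^ 5 :=
    pow_le_pow_of_le_one (by norm_num) (by norm_num) ht
  calc roundingExcess 0.535413 t s ≤ exp (-0.535413) + 0.535413 ^ t * exp (-1) :=
        roundingExcess_le_exp_neg_add (by norm_num) (by norm_num) hs1 (by omega)
    _ ≤ 0.59 + 0.535413 ^ 5 * 0.3678794412 := by gcongr; exact exp_neg_one_lt_d9.le
    _ ≤ 0.60793 := by norm_num

theorem stmt_7 (s : ℝ) (hs0 : 0 ≤ s) (hs1 : s ≤ 1) (t : ℕ) (ht : 1 ≤ t) :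
    1 + Real.exp (s - 1) * (1 - (1 - 0.464587) * s / t) ^ t
      + Real.exp (s - 1) * (1 - 0.464587) ^ t * (1 - s / t) ^ t ≤ 1.60793 := by
  have key : roundingExcess 0.535413 t s ≤ 0.60793 := by
    obtain rfl | rfl | rfl | rfl | h5 : t = 1 ∨ t = 2 ∨ t = 3 ∨ t = 4 ∨ 5 ≤ t := by omega
    · exact roundingExcess_one_le hs0 hs1
    · exact roundingExcess_two_le hs1
    · exact roundingExcess_three_le hs0 hs1
    · exact roundingExcess_four_le hs0 hs1
    · exact roundingExcess_le_of_five_le hs1 h5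
  unfold roundingExcess at key
  norm_num
  linear_combination key
end

section
/- Fix integers k ≥ 1 and k' ≥ k and let n = k' + 1. Consider the metric space on n points where d(i,j) = 1 for all distinct i, j. If S is drawn uniformly at random from the k-element subsets of [n], then for every point j, E[d(j, S)] = 1 − k/(k'+1). Moreover, every k'-element subset S' of [n] has max_j d(j, S') = 1. Consequently, any set S' of size k' = α·k with max_j d(j,S') ≤ β·t for the feasible target t = E[d(j,S)] = 1 − k/(k'+1) requires β ≥ (α·k + 1)/((α−1)·k + 1). -/
open scoped Classical

lemma aux_choose (k k' : ℕ) (hkk' : k ≤ k') :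
    (k' + 1).choose k * (k' + 1 - k) = k'.choose k * (k' + 1) := by
  rw [← Nat.choose_succ_right_eq, ← Nat.add_one_mul_choose_eq, mul_comm]

theorem stmt_13 (k k' : ℕ) (hk : 1 ≤ k) (hkk' : k ≤ k') :
    -- uniform metric on n = k'+1 points; d(j,S) = 0 if j ∈ S and 1 otherwise
    (∀ j : Fin (k' + 1),
      (∑ S ∈ (Finset.univ : Finset (Fin (k' + 1))).powersetCard k,
          (if j ∈ S then (0 : ℝ) else 1))
        / ((Finset.univ : Finset (Fin (k' + 1))).powersetCard k).card
        = 1 - (k : ℝ) / (k' + 1)) ∧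
    (∀ S' : Finset (Fin (k' + 1)), S'.card = k' →
      ∃ j : Fin (k' + 1), (if j ∈ S' then (0 : ℝ) else 1) = 1) ∧
    (∀ β : ℝ, ∀ S' : Finset (Fin (k' + 1)), S'.card = k' →
      (∀ j : Fin (k' + 1),
        (if j ∈ S' then (0 : ℝ) else 1) ≤ β * (1 - (k : ℝ) / (k' + 1))) →
      β ≥ ((k' : ℝ) + 1) / ((k' : ℝ) - k + 1)) := by
  have hmiss : ∀ S' : Finset (Fin (k' + 1)), S'.card = k' →
      ∃ j : Fin (k' + 1), j ∉ S' := by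
    intro S' hS'
    by_contra h
    push_neg at h
    have hsub : (Finset.univ : Finset (Fin (k' + 1))) ⊆ S' := fun x _ => h x
    have := Finset.card_le_card hsub
    simp [hS'] at this
  have hn : ((k' : ℝ) + 1) ≠ 0 := by positivity
  refine ⟨?_, ?_, ?_⟩
  · intro j
    have hrw : ∀ S : Finset (Fin (k' + 1)),
        (if j ∈ S then (0 : ℝ) else 1) = if j ∉ S then 1 else 0 := by
      intro S; by_cases h : j ∈ S <;> simp [h]
    have hfilter : ((Finset.univ : Finset (Fin (k' + 1))).powersetCard k).filter
          (fun S => j ∉ S)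
        = ((Finset.univ : Finset (Fin (k' + 1))).erase j).powersetCard k := by
      ext S
      simp only [Finset.mem_filter, Finset.mem_powersetCard, Finset.subset_erase]
      constructor
      · rintro ⟨⟨h1, h2⟩, h3⟩; exact ⟨⟨h1, h3⟩, h2⟩
      · rintro ⟨⟨h1, h3⟩, h2⟩; exact ⟨⟨h1, h2⟩, h3⟩
    have hsum : (∑ S ∈ (Finset.univ : Finset (Fin (k' + 1))).powersetCard k,
          (if j ∈ S then (0 : ℝ) else 1)) = (k'.choose k : ℝ) := by
      simp_rw [hrw]
      rw [Finset.sum_boole, hfilter, Finset.card_powersetCard,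
        Finset.card_erase_of_mem (Finset.mem_univ j)]
      simp
    rw [hsum, Finset.card_powersetCard]
    simp only [Finset.card_univ, Fintype.card_fin]
    have hch : ((k' + 1).choose k : ℝ) ≠ 0 := by
      exact_mod_cast Nat.pos_iff_ne_zero.mp (Nat.choose_pos (by omega))
    have key := aux_choose k k' hkk'
    have key' : ((k' + 1).choose k : ℝ) * ((k' : ℝ) + 1 - k)
        = (k'.choose k : ℝ) * ((k' : ℝ) + 1) := by
      have h := congrArg (Nat.cast : ℕ → ℝ) key
      push_cast [Nat.cast_sub (show k ≤ k' + 1 by omega)] at h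
      linarith
    field_simp
    push_cast at key' ⊢
    nlinarith [key']
  · intro S' hS'
    obtain ⟨j, hj⟩ := hmiss S' hS'
    exact ⟨j, by simp [hj]⟩
  · intro β S' hS' hβ
    obtain ⟨j, hj⟩ := hmiss S' hS'
    have h1 : (1 : ℝ) ≤ β * (1 - (k : ℝ) / (k' + 1)) := by
      have := hβ j; simpa [hj] using this
    have hd : (0 : ℝ) < (k' : ℝ) - k + 1 := by
      have : (k : ℝ) ≤ k' := by exact_mod_cast hkk'
      linarith
    rw [ge_iff_le, div_le_iff₀ hd]
    have hc : (1 : ℝ) - (k : ℝ) / (k' + 1) = ((k' : ℝ) - k + 1) / ((k' : ℝ) + 1) := by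
      field_simp; ring
    rw [hc] at h1
    have hn' : (0 : ℝ) < (k' : ℝ) + 1 := by positivity
    rw [← mul_div_assoc, le_div_iff₀ hn'] at h1
    linarith
end
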